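/- arXiv:1809.06758 — 3 statements merged into one kernel-verified Lean document; each statement's English description precedes it below -/
import Mathlib

section
/- A Markov kernel Q on a countable state space is reversible with respect to a probability distribution π if and only if Q admits a symmetric decomposition (K, V) in which every kernel K_z is reversible with respect to π. -/
open scoped ENNReal

/-! Summing the detailed-balance equations of the `K z` with weights `V x z` gives detailed
balance for `Q`; the weights `V x z` and `V y z` can be exchanged because they agree whenever
`K z y x ≠ 0`, and otherwise both terms vanish by reversibility of `K z`. The converse is
witnessed by the trivial decomposition with a single kernel `Q`. -/

section SymmetricMixture

variable {X Z : Type*} (π : X → ℝ≥0∞) (K : Z → X → X → ℝ≥0∞) (V : X → Z → ℝ≥0∞)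

theorem weighted_detailed_balance (hsym : ∀ z x y, 0 < K z x y → V x z = V y z)
    (hKrev : ∀ z x y, π x * K z x y = π y * K z y x) (z : Z) (x y : X) :
    V x z * (π x * K z x y) = V y z * (π y * K z y x) := by
  rw [hKrev z x y]
  rcases eq_zero_or_pos (K z y x) with hzero | hpos
  · simp [hzero]
  · rw [hsym z y x hpos]

theorem detailed_balance_tsum_of_symmetric (hsym : ∀ z x y, 0 < K z x y → V x z = V y z)
    (hKrev : ∀ z x y, π x * K z x y = π y * K z y x) (x y : X) :
    π x * ∑' z, V x z * K z x y = π y * ∑' z, V y z * K z y x := by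
  simp only [← ENNReal.tsum_mul_left, mul_left_comm (π _)]
  exact tsum_congr (weighted_detailed_balance π K V hsym hKrev · x y)

end SymmetricMixture

theorem stmt1_general {X : Type*}
    (π : X → ℝ≥0∞)
    (Q : X → X → ℝ≥0∞) (hQ : ∀ x, ∑' y, Q x y = 1) :
    (∀ x y, π x * Q x y = π y * Q y x) ↔
      ∃ (Z : Type) (_ : Countable Z) (K : Z → X → X → ℝ≥0∞) (V : X → Z → ℝ≥0∞),
        (∀ z x, ∑' y, K z x y = 1) ∧
        (∀ x, ∑' z, V x z = 1) ∧
        (∀ x y, Q x y = ∑' z, V x z * K z x y) ∧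
        (∀ z x y, 0 < K z x y → V x z = V y z) ∧
        (∀ z x y, π x * K z x y = π y * K z y x) := by
  constructor
  · intro hrev
    exact ⟨Unit, inferInstance, fun _ => Q, fun _ _ => 1, fun _ => hQ, by simp, by simp,
      fun _ _ _ _ => rfl, fun _ => hrev⟩
  · rintro ⟨Z, -, K, V, -, -, hdec, hsym, hKrev⟩ x y
    rw [hdec x y, hdec y x]
    exact detailed_balance_tsum_of_symmetric π K V hsym hKrev x y

/-- A Markov kernel `Q` on a countable state space is reversible w.r.t. a
probability distribution `π` iff `Q` admits a symmetric decomposition `(K, V)` in which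
every kernel `K z` is reversible w.r.t. `π`. -/
theorem stmt1 {X : Type*} [Countable X]
    (π : X → ℝ≥0∞) (hπ : ∑' x, π x = 1)
    (Q : X → X → ℝ≥0∞) (hQ : ∀ x, ∑' y, Q x y = 1) :
    (∀ x y, π x * Q x y = π y * Q y x) ↔
      ∃ (Z : Type) (_ : Countable Z) (K : Z → X → X → ℝ≥0∞) (V : X → Z → ℝ≥0∞),
        (∀ z x, ∑' y, K z x y = 1) ∧
        (∀ x, ∑' z, V x z = 1) ∧
        (∀ x y, Q x y = ∑' z, V x z * K z x y) ∧
        (∀ z x y, 0 < K z x y → V x z = V y z) ∧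
        (∀ z x y, π x * K z x y = π y * K z y x) :=
  stmt1_general π Q hQ
end

section
/- Let r ∈ ℕ^I and c ∈ ℕ^J with Σ_i r_i = Σ_j c_j, and let X be the set of I×J nonnegative integer matrices with row sums r and column sums c. For any two matrices x, y ∈ X with x ≠ y, there exist row indices i ≠ i' and column indices j ≠ j' and a nonzero integer Δ such that adding Δ to entries (i,j) and (i',j'), and subtracting Δ from entries (i,j') and (i',j), applied to x yields a matrix x'' ∈ X with Σ_{a,b} |x''_{ab} − y_{ab}| < Σ_{a,b} |x_{ab} − y_{ab}|. -/
/-!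
Since `x ≠ y` and their row sums agree, some row `i` has a column `j` with `x i j > y i j`
and a column `j'` with `x i j' < y i j'`; since the column sums agree, some row `i'` has
`x i' j' > y i' j'`. Subtracting one unit of the basic move on rows `i, i'` and columns
`j, j'` keeps the margins and nonnegativity, lowers `|x - y|` at three corners and raises it
by at most one at the fourth, so the L¹ distance drops.
-/

open Finset

theorem Fintype.exists_lt_of_sum_eq_of_ne {α M : Type*} [Fintype α] [AddCommMonoid M]
    [LinearOrder M] [IsOrderedCancelAddMonoid M] {f g : α → M}
    (hsum : ∑ a, f a = ∑ a, g a) (hne : f ≠ g) : ∃ a, f a < g a := by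
  by_contra! hle
  exact hne <| funext fun a =>
    ((sum_eq_sum_iff_of_le fun a _ => hle a).1 hsum.symm a (mem_univ a)).symm

theorem Fintype.sum_lt_sum_of_two_drops {α : Type*} [Fintype α] {f g : α → ℕ} {p₁ p₂ q : α}
    (h₁₂ : p₁ ≠ p₂) (h₁q : p₁ ≠ q) (h₂q : p₂ ≠ q) (hle : ∀ p, p ≠ q → g p ≤ f p)
    (hq : g q ≤ f q + 1) (h₁ : g p₁ < f p₁) (h₂ : g p₂ < f p₂) : ∑ p, g p < ∑ p, f p := by
  classical
  have hpt : ∀ p, g p + (if p = p₁ then 1 else 0) + (if p = p₂ then 1 else 0)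
      ≤ f p + (if p = q then 1 else 0) := by
    intro p
    rcases eq_or_ne p q with rfl | hp
    · rw [if_neg h₁q.symm, if_neg h₂q.symm, if_pos rfl]; omega
    · have := hle p hp
      rw [if_neg hp]
      split_ifs <;> subst_vars <;> first | omega | exact absurd rfl h₁₂
  have := sum_le_sum fun p (_ : p ∈ univ) => hpt p
  simp only [sum_add_distrib, sum_ite_eq'] at this
  omega

section BasicMove

variable {ι κ : Type*} [DecidableEq ι] [DecidableEq κ]

def signPair (i i' a : ι) : ℤ := if a = i then 1 else if a = i' then -1 else 0

theorem sum_signPair [Fintype ι] {i i' : ι} (h : i ≠ i') : ∑ a, signPair i i' a = 0 := by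
  simp [signPair, sum_ite, filter_ne', filter_eq', h.symm]

def basicMove (i i' : ι) (j j' : κ) (a : ι) (b : κ) : ℤ := signPair i i' a * signPair j j' b

theorem sum_add_mul_basicMove_right [Fintype κ] {i i' : ι} {j j' : κ} (hj : j ≠ j')
    (z : ι → κ → ℤ) (Δ : ℤ) (a : ι) :
    ∑ b, (z a b + Δ * basicMove i i' j j' a b) = ∑ b, z a b := by
  simp only [basicMove, sum_add_distrib, ← mul_sum, sum_signPair hj, mul_zero, add_zero]

theorem sum_add_mul_basicMove_left [Fintype ι] {i i' : ι} {j j' : κ} (hi : i ≠ i')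
    (z : ι → κ → ℤ) (Δ : ℤ) (b : κ) :
    ∑ a, (z a b + Δ * basicMove i i' j j' a b) = ∑ a, z a b := by
  simp only [basicMove, sum_add_distrib, ← sum_mul, ← mul_sum, sum_signPair hi, zero_mul,
    mul_zero, add_zero]

theorem basicMove_le {i i' : ι} {j j' : κ} (hi : i ≠ i') (hj : j ≠ j') {z : ι → κ → ℤ}
    (hz : ∀ a b, 0 ≤ z a b) (hij : 0 < z i j) (hij' : 0 < z i' j') (a : ι) (b : κ) :
    basicMove i i' j j' a b ≤ z a b := by
  have := hz a b
  simp only [basicMove, signPair]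
  split_ifs <;> subst_vars <;> norm_num <;> omega

theorem sum_natAbs_sub_basicMove_lt [Fintype ι] [Fintype κ] {i i' : ι} {j j' : κ}
    (hi : i ≠ i') (hj : j ≠ j') {x y : ι → κ → ℤ} (hij : y i j < x i j)
    (hij' : x i j' < y i j') (hi'j' : y i' j' < x i' j') :
    ∑ a, ∑ b, (x a b - basicMove i i' j j' a b - y a b).natAbs
      < ∑ a, ∑ b, (x a b - y a b).natAbs := by
  simp only [← Fintype.sum_prod_type']
  refine Fintype.sum_lt_sum_of_two_drops (p₁ := (i, j)) (p₂ := (i', j')) (q := (i', j))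
    (by simp [hi]) (by simp [hi]) (by simp [hj.symm]) ?_ ?_ ?_ ?_
  · rintro ⟨a, b⟩ hab
    simp only [basicMove, signPair]
    split_ifs <;> subst_vars <;> simp_all <;> omega
  all_goals simp [basicMove, signPair, hi.symm, hj.symm]; omega

end BasicMove

theorem exists_corners_of_ne {ι κ M : Type*} [Fintype ι] [Fintype κ] [AddCommMonoid M]
    [LinearOrder M] [IsOrderedCancelAddMonoid M] {x y : ι → κ → M}
    (hrow : ∀ a, ∑ b, x a b = ∑ b, y a b) (hcol : ∀ b, ∑ a, x a b = ∑ a, y a b)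
    (hne : x ≠ y) :
    ∃ i i' j j', y i j < x i j ∧ x i j' < y i j' ∧ y i' j' < x i' j' := by
  obtain ⟨i, hi⟩ : ∃ i, x i ≠ y i := by
    by_contra! h
    exact hne (funext h)
  obtain ⟨j, hj⟩ := Fintype.exists_lt_of_sum_eq_of_ne (hrow i).symm hi.symm
  obtain ⟨j', hj'⟩ := Fintype.exists_lt_of_sum_eq_of_ne (hrow i) hi
  obtain ⟨i', hi'⟩ := Fintype.exists_lt_of_sum_eq_of_ne (hcol j').symm
    fun h => hj'.ne (congrFun h i).symm
  exact ⟨i, i', j, j', hj, hj', hi'⟩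

theorem stmt14_general {I J : ℕ} (r : Fin I → ℕ) (c : Fin J → ℕ)
    (x y : Fin I → Fin J → ℕ)
    (hxr : ∀ i, ∑ j, x i j = r i) (hxc : ∀ j, ∑ i, x i j = c j)
    (hyr : ∀ i, ∑ j, y i j = r i) (hyc : ∀ j, ∑ i, y i j = c j)
    (hne : x ≠ y) :
    ∃ (i i' : Fin I) (j j' : Fin J) (Δ : ℤ) (x'' : Fin I → Fin J → ℕ),
      i ≠ i' ∧ j ≠ j' ∧ Δ ≠ 0 ∧
      (∀ a b, (x'' a b : ℤ) = (x a b : ℤ) +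
        Δ * ((if a = i then 1 else if a = i' then -1 else 0) *
             (if b = j then 1 else if b = j' then -1 else 0))) ∧
      (∀ a, ∑ b, x'' a b = r a) ∧ (∀ b, ∑ a, x'' a b = c b) ∧
      (∑ a, ∑ b, ((x'' a b : ℤ) - (y a b : ℤ)).natAbs)
        < ∑ a, ∑ b, ((x a b : ℤ) - (y a b : ℤ)).natAbs := by
  obtain ⟨i, i', j, j', hij, hij', hi'j'⟩ :=
    exists_corners_of_ne (fun a => (hxr a).trans (hyr a).symm)
      (fun b => (hxc b).trans (hyc b).symm) hne
  have hi : i ≠ i' := by rintro rfl; omega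
  have hj : j ≠ j' := by rintro rfl; omega
  set m := basicMove i i' j j'
  have hmx : ∀ a b, m a b ≤ x a b :=
    basicMove_le hi hj (fun _ _ => Int.natCast_nonneg _) (by omega) (by omega)
  have hx'' : ∀ a b, ((x a b - m a b).toNat : ℤ) = x a b + -1 * m a b := fun a b => by
    have := hmx a b; omega
  refine ⟨i, i', j, j', -1, fun a b => (x a b - m a b).toNat, hi, hj, by norm_num, hx'',
    fun a => ?_, fun b => ?_, ?_⟩
  · rw [← hxr a, ← Nat.cast_inj (R := ℤ)]
    push_cast [hx'']
    exact sum_add_mul_basicMove_right (i := i) (i' := i') hj (fun a b => (x a b : ℤ)) _ a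
  · rw [← hxc b, ← Nat.cast_inj (R := ℤ)]
    push_cast [hx'']
    exact sum_add_mul_basicMove_left (j := j) (j' := j') hi (fun a b => (x a b : ℤ)) _ b
  · simp only [hx'', neg_one_mul, ← sub_eq_add_neg]
    exact_mod_cast sum_natAbs_sub_basicMove_lt hi hj (x := fun a b => x a b)
      (y := fun a b => y a b) (by exact_mod_cast hij) (by exact_mod_cast hij')
      (by exact_mod_cast hi'j')

/-- Let `X` be the set of `I × J` nonnegative integer matrices with row sums
`r` and column sums `c` (with `Σ r = Σ c`). For any two distinct `x, y ∈ X` there is a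
2×2 basic move (rows `i ≠ i'`, columns `j ≠ j'`, nonzero integer `Δ`, added with the
pattern `(+Δ, −Δ; −Δ, +Δ)`) taking `x` to a matrix `x'' ∈ X` strictly closer to `y` in
`L¹` distance. -/
theorem stmt14 {I J : ℕ} (r : Fin I → ℕ) (c : Fin J → ℕ)
    (hrc : ∑ i, r i = ∑ j, c j)
    (x y : Fin I → Fin J → ℕ)
    (hxr : ∀ i, ∑ j, x i j = r i) (hxc : ∀ j, ∑ i, x i j = c j)
    (hyr : ∀ i, ∑ j, y i j = r i) (hyc : ∀ j, ∑ i, y i j = c j)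
    (hne : x ≠ y) :
    ∃ (i i' : Fin I) (j j' : Fin J) (Δ : ℤ) (x'' : Fin I → Fin J → ℕ),
      i ≠ i' ∧ j ≠ j' ∧ Δ ≠ 0 ∧
      (∀ a b, (x'' a b : ℤ) = (x a b : ℤ) +
        Δ * ((if a = i then 1 else if a = i' then -1 else 0) *
             (if b = j then 1 else if b = j' then -1 else 0))) ∧
      (∀ a, ∑ b, x'' a b = r a) ∧ (∀ b, ∑ a, x'' a b = c b) ∧
      (∑ a, ∑ b, ((x'' a b : ℤ) - (y a b : ℤ)).natAbs)
        < ∑ a, ∑ b, ((x a b : ℤ) - (y a b : ℤ)).natAbs :=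
  stmt14_general r c x y hxr hxc hyr hyc hne
end

section
/- Let x be an I×J nonnegative integer matrix and fix rows i ≠ i' and columns j ≠ j'. The set of integers Δ for which adding the pattern (+Δ, −Δ; −Δ, +Δ) to the 2×2 submatrix at (i,i')×(j,j') keeps all entries nonnegative is exactly the integer interval [−min(x_{ij}, x_{i'j'}), min(x_{ij'}, x_{i'j})], and sampling Δ uniformly from this interval defines a Markov kernel on the set of matrices with given margins that satisfies detailed balance with respect to the uniform distribution. -/
/-- `applyMove i i' j j' x y Δ` says `y` is obtained from `x` by adding the 2×2 pattern
`(+Δ, −Δ; −Δ, +Δ)` on rows `i, i'` and columns `j, j'`. -/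
def applyMove {I J : ℕ} (i i' : Fin I) (j j' : Fin J)
    (x y : Fin I → Fin J → ℕ) (Δ : ℤ) : Prop :=
  ∀ a b, (y a b : ℤ) = (x a b : ℤ) +
    Δ * ((if a = i then 1 else if a = i' then -1 else 0) *
         (if b = j then 1 else if b = j' then -1 else 0))

open Classical in
/-- The switch kernel: from `x`, sample `Δ` uniformly from the admissible integer interval
`[−min(x_{ij}, x_{i'j'}), min(x_{ij'}, x_{i'j})]` and apply the 2×2 move. -/
noncomputable def switchKer {I J : ℕ} (i i' : Fin I) (j j' : Fin J)
    (x y : Fin I → Fin J → ℕ) : ℝ :=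
  if ∃ Δ : ℤ, Δ ∈ Set.Icc (-(min (x i j) (x i' j') : ℤ)) ((min (x i j') (x i' j) : ℤ)) ∧
      applyMove i i' j j' x y Δ
  then 1 / ((min (x i j) (x i' j') : ℝ) + (min (x i j') (x i' j) : ℝ) + 1)
  else 0


/-!
A move by `Δ` shifts `x_{ij}` and `x_{i'j'}` up by `Δ` and `x_{ij'}`, `x_{i'j}` down by `Δ`, so
the two minima bounding the admissible range shift by `+Δ` and `-Δ`, and the range viewed from
the target has the same length. Since the inverse move is `-Δ`, which is admissible from the
target exactly when `Δ` is admissible from the source, the kernel is symmetric.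
-/

theorem setOf_nonneg_add_sub_eq_Icc (a b c d : ℕ) :
    {Δ : ℤ | 0 ≤ (a : ℤ) + Δ ∧ 0 ≤ (b : ℤ) + Δ ∧ 0 ≤ (c : ℤ) - Δ ∧ 0 ≤ (d : ℤ) - Δ}
      = Set.Icc (-(min a b : ℤ)) (min c d : ℤ) := by
  ext Δ
  simp only [Set.mem_ofPred_eq, Set.mem_Icc]
  omega

namespace applyMove

variable {I J : ℕ} {i i' : Fin I} {j j' : Fin J} {x y : Fin I → Fin J → ℕ} {Δ : ℤ}

theorem symm (h : applyMove i i' j j' x y Δ) : applyMove i i' j j' y x (-Δ) := fun a b => by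
  linarith [h a b]

theorem apply_corners (hi : i ≠ i') (hj : j ≠ j') (h : applyMove i i' j j' x y Δ) :
    (y i j : ℤ) = x i j + Δ ∧ (y i' j' : ℤ) = x i' j' + Δ ∧
      (y i j' : ℤ) = x i j' - Δ ∧ (y i' j : ℤ) = x i' j - Δ := by
  have h₁ := h i j
  have h₂ := h i' j'
  have h₃ := h i j'
  have h₄ := h i' j
  simp only [hi, hi.symm, hj, hj.symm, if_true, if_false, mul_one, mul_neg, neg_neg,
    ← sub_eq_add_neg] at h₁ h₂ h₃ h₄
  exact ⟨h₁, h₂, h₃, h₄⟩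

theorem min_add_min_eq (hi : i ≠ i') (hj : j ≠ j') (h : applyMove i i' j j' x y Δ) :
    (min (y i j) (y i' j') : ℝ) + (min (y i j') (y i' j) : ℝ)
      = (min (x i j) (x i' j') : ℝ) + (min (x i j') (x i' j) : ℝ) := by
  obtain ⟨h₁, h₂, h₃, h₄⟩ := apply_corners hi hj h
  have : (min (y i j) (y i' j') : ℤ) + (min (y i j') (y i' j) : ℤ)
      = (min (x i j) (x i' j') : ℤ) + (min (x i j') (x i' j) : ℤ) := by
    omega
  exact_mod_cast this

theorem neg_mem_Icc (hi : i ≠ i') (hj : j ≠ j') (h : applyMove i i' j j' x y Δ)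
    (hΔ : Δ ∈ Set.Icc (-(min (x i j) (x i' j') : ℤ)) (min (x i j') (x i' j) : ℤ)) :
    -Δ ∈ Set.Icc (-(min (y i j) (y i' j') : ℤ)) (min (y i j') (y i' j) : ℤ) := by
  obtain ⟨h₁, h₂, h₃, h₄⟩ := apply_corners hi hj h
  obtain ⟨hlo, hhi⟩ := hΔ
  constructor <;> omega

end applyMove

section

variable {I J : ℕ} {i i' : Fin I} {j j' : Fin J}

theorem exists_applyMove_mem_Icc_comm (hi : i ≠ i') (hj : j ≠ j') (x y : Fin I → Fin J → ℕ) :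
    (∃ Δ : ℤ, Δ ∈ Set.Icc (-(min (x i j) (x i' j') : ℤ)) (min (x i j') (x i' j) : ℤ) ∧
        applyMove i i' j j' x y Δ) ↔
      ∃ Δ : ℤ, Δ ∈ Set.Icc (-(min (y i j) (y i' j') : ℤ)) (min (y i j') (y i' j) : ℤ) ∧
        applyMove i i' j j' y x Δ := by
  constructor <;> rintro ⟨Δ, hΔ, h⟩ <;> exact ⟨-Δ, h.neg_mem_Icc hi hj hΔ, h.symm⟩

theorem switchKer_comm (hi : i ≠ i') (hj : j ≠ j') (x y : Fin I → Fin J → ℕ) :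
    switchKer i i' j j' x y = switchKer i i' j j' y x := by
  unfold switchKer
  by_cases hmove : ∃ Δ : ℤ, Δ ∈ Set.Icc (-(min (x i j) (x i' j') : ℤ))
      (min (x i j') (x i' j) : ℤ) ∧ applyMove i i' j j' x y Δ
  · rw [if_pos hmove, if_pos ((exists_applyMove_mem_Icc_comm hi hj x y).mp hmove)]
    obtain ⟨Δ, -, h⟩ := hmove
    rw [h.min_add_min_eq hi hj]
  · rw [if_neg hmove, if_neg (mt (exists_applyMove_mem_Icc_comm hi hj x y).mpr hmove)]

end

/-- The set of integers `Δ` for which the 2×2 pattern `(+Δ, −Δ; −Δ, +Δ)` at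
rows `i ≠ i'` and columns `j ≠ j'` keeps all entries of `x` nonnegative is exactly the
integer interval `[−min(x_{ij}, x_{i'j'}), min(x_{ij'}, x_{i'j})]`, and sampling `Δ`
uniformly from this interval defines a Markov kernel on the matrices with the given
margins which satisfies detailed balance w.r.t. the uniform distribution. -/
theorem stmt15 {I J : ℕ} (i i' : Fin I) (j j' : Fin J)
    (hi : i ≠ i') (hj : j ≠ j')
    (r : Fin I → ℕ) (c : Fin J → ℕ) :
    (∀ x : Fin I → Fin J → ℕ,
      {Δ : ℤ | 0 ≤ (x i j : ℤ) + Δ ∧ 0 ≤ (x i' j' : ℤ) + Δ ∧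
               0 ≤ (x i j' : ℤ) - Δ ∧ 0 ≤ (x i' j : ℤ) - Δ}
        = Set.Icc (-(min (x i j) (x i' j') : ℤ)) ((min (x i j') (x i' j) : ℤ))) ∧
    (∀ x y : Fin I → Fin J → ℕ,
      (∀ a, ∑ b, x a b = r a) → (∀ b, ∑ a, x a b = c b) →
      (∀ a, ∑ b, y a b = r a) → (∀ b, ∑ a, y a b = c b) →
      switchKer i i' j j' x y = switchKer i i' j j' y x) :=
  ⟨fun _ => setOf_nonneg_add_sub_eq_Icc _ _ _ _,
    fun x y _ _ _ _ => switchKer_comm hi hj x y⟩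
end
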